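/- arXiv:2510.04807 — 2 statements merged into one kernel-verified Lean document; each statement's English description precedes it below -/
import Mathlib

section
/- Let n ≥ 1, M ∈ ℝ^{n×n}, let P and Σ be symmetric positive semidefinite n×n matrices, and let λ ≥ 0 with Σ ⪰ λI. Then √(λ_max(MΣMᵀ + P)) − √(λ_max(λ·MMᵀ + P)) ≤ ‖M‖ · (√(λ_max(Σ)) − √λ), where ‖M‖ is the ℓ²-operator (spectral) norm of M. -/
/-!
For a unit vector `v` put `w = Mᵀ v`. The Rayleigh quotients of `M Σ Mᵀ + P` and `λ M Mᵀ + P`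
at `v` are `wᵀ Σ w + vᵀ P v` and `λ |w|² + vᵀ P v`. Since `t ↦ √(t + c) - √t` is antitone, their
square roots differ by at most `√(wᵀ Σ w) - √(λ |w|²) ≤ |w| (√λ_max(Σ) - √λ)`, and `|w| ≤ ‖M‖`.
Taking the supremum over `v` gives the bound.
-/

open Matrix

noncomputable def enorm {n : ℕ} (v : Fin n → ℝ) : ℝ := Real.sqrt (∑ i, v i ^ 2)

noncomputable def lamMax {n : ℕ} (M : Matrix (Fin n) (Fin n) ℝ) : ℝ :=
  sSup {r : ℝ | ∃ v : Fin n → ℝ, _root_.enorm v = 1 ∧ r = v ⬝ᵥ M.mulVec v}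

noncomputable def lamMin {n : ℕ} (M : Matrix (Fin n) (Fin n) ℝ) : ℝ :=
  sInf {r : ℝ | ∃ v : Fin n → ℝ, _root_.enorm v = 1 ∧ r = v ⬝ᵥ M.mulVec v}

noncomputable def specNorm {n p : ℕ} (M : Matrix (Fin n) (Fin p) ℝ) : ℝ :=
  Real.sqrt (lamMax (Mᵀ * M))

structure Policy (n m T : ℕ) (A : Matrix (Fin n) (Fin n) ℝ) (B : Matrix (Fin n) (Fin m) ℝ) where
  xbar : ℕ → Fin n → ℝ
  ubar : ℕ → Fin m → ℝ
  K : ℕ → Matrix (Fin m) (Fin n) ℝ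
  xbar_dyn : ∀ k, k < T → xbar (k + 1) = A.mulVec (xbar k) + B.mulVec (ubar k)

namespace Policy

variable {n m T : ℕ} {A : Matrix (Fin n) (Fin n) ℝ} {B : Matrix (Fin n) (Fin m) ℝ}

noncomputable def mean (C : Policy n m T A B) (mu0 : Fin n → ℝ) : ℕ → Fin n → ℝ
  | 0 => mu0
  | k + 1 => A.mulVec (C.mean mu0 k) + B.mulVec (C.ubar k)
      + B.mulVec ((C.K k).mulVec (C.mean mu0 k - C.xbar k))

noncomputable def cov (C : Policy n m T A B) (D : Matrix (Fin n) (Fin n) ℝ)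
    (Sig0 : Matrix (Fin n) (Fin n) ℝ) : ℕ → Matrix (Fin n) (Fin n) ℝ
  | 0 => Sig0
  | k + 1 => (A + B * C.K k) * C.cov D Sig0 k * (A + B * C.K k)ᵀ + D * Dᵀ

noncomputable def clProd (C : Policy n m T A B) : ℕ → Matrix (Fin n) (Fin n) ℝ
  | 0 => 1
  | k + 1 => (A + B * C.K k) * C.clProd k

end Policy

def stateOK {n m T : ℕ} {A : Matrix (Fin n) (Fin n) ℝ} {B : Matrix (Fin n) (Fin m) ℝ}
    (c : ℝ) {I : ℕ} (ax : Fin I → Fin n → ℝ) (bx : Fin I → ℝ)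
    (D : Matrix (Fin n) (Fin n) ℝ) (C : Policy n m T A B)
    (mu0 : Fin n → ℝ) (Sig0 : Matrix (Fin n) (Fin n) ℝ) : Prop :=
  ∀ i : Fin I, ∀ k ≤ T,
    ax i ⬝ᵥ C.mean mu0 k + c * Real.sqrt (ax i ⬝ᵥ (C.cov D Sig0 k).mulVec (ax i)) ≤ bx i

def ctrlOK {n m T : ℕ} {A : Matrix (Fin n) (Fin n) ℝ} {B : Matrix (Fin n) (Fin m) ℝ}
    (c : ℝ) {J : ℕ} (au : Fin J → Fin m → ℝ) (bu : Fin J → ℝ)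
    (D : Matrix (Fin n) (Fin n) ℝ) (C : Policy n m T A B)
    (mu0 : Fin n → ℝ) (Sig0 : Matrix (Fin n) (Fin n) ℝ) : Prop :=
  ∀ j : Fin J, ∀ k < T,
    au j ⬝ᵥ (C.ubar k + (C.K k).mulVec (C.mean mu0 k - C.xbar k))
      + c * Real.sqrt (au j ⬝ᵥ (C.K k * C.cov D Sig0 k * (C.K k)ᵀ).mulVec (au j)) ≤ bu j

def inBall {n : ℕ} (c : ℝ) (muHat : Fin n → ℝ) (rHat : ℝ)
    (mu : Fin n → ℝ) (Sig : Matrix (Fin n) (Fin n) ℝ) : Prop :=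
  _root_.enorm (mu - muHat) + c * Real.sqrt (lamMax Sig) ≤ rHat

def BRS {n m : ℕ} (T : ℕ) (A : Matrix (Fin n) (Fin n) ℝ) (B : Matrix (Fin n) (Fin m) ℝ)
    (D : Matrix (Fin n) (Fin n) ℝ) (c : ℝ) {I J : ℕ}
    (ax : Fin I → Fin n → ℝ) (bx : Fin I → ℝ) (au : Fin J → Fin m → ℝ) (bu : Fin J → ℝ)
    (S : Set ((Fin n → ℝ) × Matrix (Fin n) (Fin n) ℝ)) :
    Set ((Fin n → ℝ) × Matrix (Fin n) (Fin n) ℝ) :=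
  {p | p.2.PosSemidef ∧ ∃ C : Policy n m T A B, C.xbar 0 = p.1 ∧
    stateOK c ax bx D C p.1 p.2 ∧ ctrlOK c au bu D C p.1 p.2 ∧
    (C.mean p.1 T, C.cov D p.2 T) ∈ S}

def Proj {n : ℕ} (S : Set ((Fin n → ℝ) × Matrix (Fin n) (Fin n) ℝ)) : Set (Fin n → ℝ) :=
  {mu | ∃ Sig, (mu, Sig) ∈ S}

theorem dotProduct_self_nonneg {ι R : Type*} [Fintype ι] [Ring R] [LinearOrder R]
    [IsStrictOrderedRing R] (v : ι → R) : 0 ≤ v ⬝ᵥ v :=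
  Finset.sum_nonneg fun i _ => mul_self_nonneg (v i)

theorem dotProduct_sq_le_dotProduct_self_mul {ι R : Type*} [Fintype ι] [CommRing R]
    [LinearOrder R] [IsStrictOrderedRing R] (v w : ι → R) :
    (v ⬝ᵥ w) ^ 2 ≤ (v ⬝ᵥ v) * (w ⬝ᵥ w) := by
  simpa only [dotProduct, sq] using Finset.sum_mul_sq_le_sq_mul_sq Finset.univ v w

theorem dotProduct_mul_mul_transpose_mulVec {ι κ R : Type*} [Fintype ι] [Fintype κ] [CommRing R]
    (M : Matrix ι κ R) (S : Matrix κ κ R) (v : ι → R) :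
    v ⬝ᵥ (M * S * Mᵀ) *ᵥ v = (Mᵀ *ᵥ v) ⬝ᵥ S *ᵥ (Mᵀ *ᵥ v) := by
  rw [← mulVec_mulVec, ← mulVec_mulVec, dotProduct_mulVec, ← mulVec_transpose]

theorem mul_dotProduct_self_le_of_posSemidef_sub_smul {ι : Type*} [Fintype ι] [DecidableEq ι]
    {S : Matrix ι ι ℝ} {lam : ℝ} (h : (S - lam • (1 : Matrix ι ι ℝ)).PosSemidef) (w : ι → ℝ) :
    lam * (w ⬝ᵥ w) ≤ w ⬝ᵥ S *ᵥ w := by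
  have := h.dotProduct_mulVec_nonneg w
  rw [star_trivial, sub_mulVec, dotProduct_sub, smul_mulVec, one_mulVec, dotProduct_smul,
    smul_eq_mul] at this
  linarith

theorem Real.sqrt_add_sub_sqrt_add_le {a b c : ℝ} (hb : 0 ≤ b) (hba : b ≤ a) (hc : 0 ≤ c) :
    √(a + c) - √(b + c) ≤ √a - √b := by
  have ha : 0 ≤ a := hb.trans hba
  have h1 : √b ≤ √a := Real.sqrt_le_sqrt hba
  have h2 : √b ≤ √(b + c) := Real.sqrt_le_sqrt (by linarith)
  nlinarith [Real.sq_sqrt ha, Real.sq_sqrt hb, Real.sq_sqrt (add_nonneg ha hc),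
    Real.sq_sqrt (add_nonneg hb hc), Real.sqrt_nonneg (a + c), Real.sqrt_nonneg b,
    mul_nonneg (sub_nonneg.2 h1) (sub_nonneg.2 h2)]

theorem enorm_eq_one_iff {n : ℕ} {v : Fin n → ℝ} : _root_.enorm v = 1 ↔ v ⬝ᵥ v = 1 := by
  simp only [_root_.enorm, Real.sqrt_eq_one, dotProduct, sq]

section LamMax

variable {n : ℕ}

theorem bddAbove_rayleigh (A : Matrix (Fin n) (Fin n) ℝ) :
    BddAbove {r : ℝ | ∃ v : Fin n → ℝ, _root_.enorm v = 1 ∧ r = v ⬝ᵥ A *ᵥ v} := by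
  refine ⟨∑ i, ∑ j, |A i j|, ?_⟩
  rintro _ ⟨v, hv, rfl⟩
  have hv1 : ∀ i, |v i| ≤ 1 := fun i => by
    have : v i * v i ≤ v ⬝ᵥ v :=
      Finset.single_le_sum (f := fun j => v j * v j) (fun j _ => mul_self_nonneg _)
        (Finset.mem_univ i)
    rw [enorm_eq_one_iff.1 hv, ← abs_mul_abs_self] at this
    nlinarith [abs_nonneg (v i)]
  calc v ⬝ᵥ A *ᵥ v = ∑ i, ∑ j, v i * A i j * v j := by
        simp only [dotProduct, mulVec, Finset.mul_sum, mul_assoc]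
    _ ≤ ∑ i, ∑ j, |A i j| := by
        gcongr with i _ j _
        calc v i * A i j * v j ≤ |v i| * |A i j| * |v j| := by
              rw [← abs_mul, ← abs_mul]; exact le_abs_self _
          _ ≤ 1 * |A i j| * 1 := by gcongr <;> exact hv1 _
          _ = |A i j| := by ring

theorem le_lamMax (A : Matrix (Fin n) (Fin n) ℝ) {v : Fin n → ℝ} (hv : _root_.enorm v = 1) :
    v ⬝ᵥ A *ᵥ v ≤ lamMax A :=
  le_csSup (bddAbove_rayleigh A) ⟨v, hv, rfl⟩

theorem lamMax_nonneg {A : Matrix (Fin n) (Fin n) ℝ} (hA : ∀ v, 0 ≤ v ⬝ᵥ A *ᵥ v) :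
    0 ≤ lamMax A :=
  Real.sSup_nonneg <| by rintro _ ⟨v, -, rfl⟩; exact hA v

theorem sqrt_lamMax_le {A : Matrix (Fin n) (Fin n) ℝ} {c : ℝ}
    (hA : ∀ v, _root_.enorm v = 1 → √(v ⬝ᵥ A *ᵥ v) ≤ c) (hc : 0 ≤ c) : √(lamMax A) ≤ c := by
  refine (Real.sqrt_le_left hc).2 (Real.sSup_le ?_ (sq_nonneg c))
  rintro _ ⟨v, hv, rfl⟩
  exact (Real.sqrt_le_left hc).1 (hA v hv)

theorem dotProduct_mulVec_le_lamMax_mul (A : Matrix (Fin n) (Fin n) ℝ) (w : Fin n → ℝ) :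
    w ⬝ᵥ A *ᵥ w ≤ lamMax A * (w ⬝ᵥ w) := by
  rcases (dotProduct_self_nonneg w).eq_or_lt with h | h
  · rw [← h, dotProduct_self_eq_zero.1 h.symm]
    simp
  set s := √(w ⬝ᵥ w)
  have hs : 0 < s := Real.sqrt_pos.2 h
  have hs2 : s ^ 2 = w ⬝ᵥ w := Real.sq_sqrt h.le
  have hu : _root_.enorm (s⁻¹ • w) = 1 := by
    rw [enorm_eq_one_iff, dotProduct_smul, smul_dotProduct, smul_eq_mul, smul_eq_mul, ← hs2]
    field_simp
  have := le_lamMax A hu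
  rw [mulVec_smul, dotProduct_smul, smul_dotProduct, smul_eq_mul, smul_eq_mul] at this
  calc w ⬝ᵥ A *ᵥ w = s ^ 2 * (s⁻¹ * (s⁻¹ * (w ⬝ᵥ A *ᵥ w))) := by field_simp
    _ ≤ s ^ 2 * lamMax A := by gcongr
    _ = lamMax A * (w ⬝ᵥ w) := by rw [hs2, mul_comm]

theorem le_lamMax_of_posSemidef_sub_smul (hn : 1 ≤ n) {S : Matrix (Fin n) (Fin n) ℝ}
    {lam : ℝ} (h : (S - lam • (1 : Matrix (Fin n) (Fin n) ℝ)).PosSemidef) : lam ≤ lamMax S := by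
  have hu : _root_.enorm (Pi.single (⟨0, hn⟩ : Fin n) (1 : ℝ)) = 1 := enorm_eq_one_iff.2 (by simp)
  have := mul_dotProduct_self_le_of_posSemidef_sub_smul h (Pi.single ⟨0, hn⟩ 1)
  rw [enorm_eq_one_iff.1 hu, mul_one] at this
  exact this.trans (le_lamMax S hu)

end LamMax

theorem dotProduct_mulVec_transpose_self_le {n p : ℕ} (M : Matrix (Fin n) (Fin p) ℝ)
    (v : Fin n → ℝ) : (Mᵀ *ᵥ v) ⬝ᵥ (Mᵀ *ᵥ v) ≤ lamMax (Mᵀ * M) * (v ⬝ᵥ v) := by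
  -- `specNorm` is defined through `Mᵀ * M`, so `Mᵀ` is handled by Cauchy–Schwarz on
  -- `|w|² = v ⬝ᵥ M *ᵥ w`, which gives `|w|⁴ ≤ |v|² λ_max(Mᵀ M) |w|²`.
  set w := Mᵀ *ᵥ v
  have hMtM : ∀ u, u ⬝ᵥ (Mᵀ * M) *ᵥ u = (M *ᵥ u) ⬝ᵥ (M *ᵥ u) := fun u => by
    rw [← mulVec_mulVec, dotProduct_mulVec, vecMul_transpose]
  have hw : w ⬝ᵥ w = v ⬝ᵥ M *ᵥ w := by
    rw [dotProduct_mulVec, vecMul_transpose, dotProduct_comm]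
  have hsq : (w ⬝ᵥ w) * (w ⬝ᵥ w) ≤ (lamMax (Mᵀ * M) * (v ⬝ᵥ v)) * (w ⬝ᵥ w) := by
    calc (w ⬝ᵥ w) * (w ⬝ᵥ w) = (v ⬝ᵥ M *ᵥ w) ^ 2 := by rw [sq, ← hw]
      _ ≤ (v ⬝ᵥ v) * ((M *ᵥ w) ⬝ᵥ (M *ᵥ w)) := dotProduct_sq_le_dotProduct_self_mul _ _
      _ ≤ (v ⬝ᵥ v) * (lamMax (Mᵀ * M) * (w ⬝ᵥ w)) := by
          rw [← hMtM]
          exact mul_le_mul_of_nonneg_left (dotProduct_mulVec_le_lamMax_mul _ w)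
            (dotProduct_self_nonneg v)
      _ = (lamMax (Mᵀ * M) * (v ⬝ᵥ v)) * (w ⬝ᵥ w) := by ring
  rcases (dotProduct_self_nonneg w).eq_or_lt with h | h
  · rw [← h]
    exact mul_nonneg (lamMax_nonneg fun u => hMtM u ▸ dotProduct_self_nonneg _)
      (dotProduct_self_nonneg v)
  · exact le_of_mul_le_mul_right hsq h

theorem sqrt_dotProduct_mulVec_transpose_le_specNorm {n p : ℕ} (M : Matrix (Fin n) (Fin p) ℝ)
    {v : Fin n → ℝ} (hv : _root_.enorm v = 1) : √((Mᵀ *ᵥ v) ⬝ᵥ (Mᵀ *ᵥ v)) ≤ specNorm M := by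
  have := dotProduct_mulVec_transpose_self_le M v
  rw [enorm_eq_one_iff.1 hv, mul_one] at this
  exact Real.sqrt_le_sqrt this

theorem sqrt_dotProduct_mulVec_conj_add_le {n p : ℕ} (M : Matrix (Fin n) (Fin p) ℝ)
    {P : Matrix (Fin n) (Fin n) ℝ} (hP : P.PosSemidef) {Sig : Matrix (Fin p) (Fin p) ℝ}
    {lam : ℝ} (hlam : 0 ≤ lam) (hdom : (Sig - lam • (1 : Matrix (Fin p) (Fin p) ℝ)).PosSemidef)
    {v : Fin n → ℝ} (hv : _root_.enorm v = 1) :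
    √(v ⬝ᵥ (M * Sig * Mᵀ + P) *ᵥ v) ≤ √(lamMax (lam • (M * Mᵀ) + P))
      + √((Mᵀ *ᵥ v) ⬝ᵥ (Mᵀ *ᵥ v)) * (√(lamMax Sig) - √lam) := by
  set w := Mᵀ *ᵥ v
  have hww : 0 ≤ w ⬝ᵥ w := dotProduct_self_nonneg w
  have hPv : 0 ≤ v ⬝ᵥ P *ᵥ v := by simpa using hP.dotProduct_mulVec_nonneg v
  have hSigw : lam * (w ⬝ᵥ w) ≤ w ⬝ᵥ Sig *ᵥ w :=
    mul_dotProduct_self_le_of_posSemidef_sub_smul hdom w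
  have hlow : lam * (w ⬝ᵥ w) + v ⬝ᵥ P *ᵥ v ≤ lamMax (lam • (M * Mᵀ) + P) := by
    have := le_lamMax (lam • (M * Mᵀ) + P) hv
    rwa [add_mulVec, dotProduct_add, smul_mulVec, dotProduct_smul, smul_eq_mul,
      ← mulVec_mulVec, dotProduct_mulVec, ← mulVec_transpose] at this
  have hup : √(w ⬝ᵥ Sig *ᵥ w) ≤ √(lamMax Sig) * √(w ⬝ᵥ w) := by
    rw [← Real.sqrt_mul' _ hww]
    exact Real.sqrt_le_sqrt (dotProduct_mulVec_le_lamMax_mul Sig w)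
  calc √(v ⬝ᵥ (M * Sig * Mᵀ + P) *ᵥ v) = √(w ⬝ᵥ Sig *ᵥ w + v ⬝ᵥ P *ᵥ v) := by
        rw [add_mulVec, dotProduct_add, dotProduct_mul_mul_transpose_mulVec]
    _ ≤ √(lam * (w ⬝ᵥ w) + v ⬝ᵥ P *ᵥ v) + (√(w ⬝ᵥ Sig *ᵥ w) - √(lam * (w ⬝ᵥ w))) := by
        linarith [Real.sqrt_add_sub_sqrt_add_le (mul_nonneg hlam hww) hSigw hPv]
    _ ≤ √(lamMax (lam • (M * Mᵀ) + P)) + √(w ⬝ᵥ w) * (√(lamMax Sig) - √lam) := by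
        rw [Real.sqrt_mul hlam]
        linarith [Real.sqrt_le_sqrt hlow]

theorem sqrt_lamMax_diff_le_general (n : ℕ) (hn : 1 ≤ n)
    (M : Matrix (Fin n) (Fin n) ℝ)
    (P Sig : Matrix (Fin n) (Fin n) ℝ) (hP : P.PosSemidef)
    (lam : ℝ) (hlam : 0 ≤ lam)
    (hdom : (Sig - lam • (1 : Matrix (Fin n) (Fin n) ℝ)).PosSemidef) :
    Real.sqrt (lamMax (M * Sig * Mᵀ + P))
      - Real.sqrt (lamMax (lam • (M * Mᵀ) + P))
      ≤ specNorm M * (Real.sqrt (lamMax Sig) - Real.sqrt lam) := by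
  have hgap : 0 ≤ √(lamMax Sig) - √lam :=
    sub_nonneg.2 (Real.sqrt_le_sqrt (le_lamMax_of_posSemidef_sub_smul hn hdom))
  refine sub_le_iff_le_add'.2 (sqrt_lamMax_le (fun v hv => ?_)
    (add_nonneg (Real.sqrt_nonneg _) (mul_nonneg (Real.sqrt_nonneg _) hgap)))
  calc √(v ⬝ᵥ (M * Sig * Mᵀ + P) *ᵥ v)
      ≤ √(lamMax (lam • (M * Mᵀ) + P)) + √((Mᵀ *ᵥ v) ⬝ᵥ (Mᵀ *ᵥ v)) * (√(lamMax Sig) - √lam) :=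
        sqrt_dotProduct_mulVec_conj_add_le M hP hlam hdom hv
    _ ≤ √(lamMax (lam • (M * Mᵀ) + P)) + specNorm M * (√(lamMax Sig) - √lam) := by
        gcongr
        exact sqrt_dotProduct_mulVec_transpose_le_specNorm M hv

/-- maximal-eigenvalue square-root perturbation bound. -/
theorem sqrt_lamMax_diff_le (n : ℕ) (hn : 1 ≤ n)
    (M : Matrix (Fin n) (Fin n) ℝ)
    (P Sig : Matrix (Fin n) (Fin n) ℝ) (hP : P.PosSemidef) (hSig : Sig.PosSemidef)
    (lam : ℝ) (hlam : 0 ≤ lam)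
    (hdom : (Sig - lam • (1 : Matrix (Fin n) (Fin n) ℝ)).PosSemidef) :
    Real.sqrt (lamMax (M * Sig * Mᵀ + P))
      - Real.sqrt (lamMax (lam • (M * Mᵀ) + P))
      ≤ specNorm M * (Real.sqrt (lamMax Sig) - Real.sqrt lam) :=
  sqrt_lamMax_diff_le_general n hn M P Sig hP lam hlam hdom
end

section
/- For every n ≥ 1, a ∈ ℝⁿ, M ∈ ℝ^{n×n}, and diagonal n×n matrix Λ with nonnegative diagonal entries, the supremum over V ∈ SO(n) of aᵀ (M V Λ Vᵀ Mᵀ) a equals ‖Mᵀa‖₂² · max_i Λ_{ii}, and this supremum is attained by some V ∈ SO(n). -/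
open Matrix

/-- Membership in the special orthogonal group SO(n). -/
def isSO {n : ℕ} (V : Matrix (Fin n) (Fin n) ℝ) : Prop := Vᵀ * V = 1 ∧ V.det = 1

/-! With `b = Mᵀa`, the form equals `∑ i, Λᵢᵢ (Vᵀb)ᵢ²`, which is at most `maxᵢ Λᵢᵢ · ‖Vᵀb‖² =
maxᵢ Λᵢᵢ · ‖b‖²` because `V` is orthogonal. Equality holds for a rotation taking `b` onto the axis of
a maximal `Λᵢᵢ`: take an orthonormal basis extending `b / ‖b‖` as columns, and flip the sign of that
one column if needed to make the determinant `1`. -/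

section

variable {ι : Type*} [Fintype ι]

lemma dotProduct_mul_mul_transpose_mulVec_s15 {R : Type*} [CommSemiring R] (A L : Matrix ι ι R)
    (x : ι → R) : x ⬝ᵥ (A * L * Aᵀ) *ᵥ x = (Aᵀ *ᵥ x) ⬝ᵥ L *ᵥ (Aᵀ *ᵥ x) := by
  simp only [← mulVec_mulVec, dotProduct_mulVec, ← mulVec_transpose]

lemma Matrix.IsDiag.dotProduct_mulVec_self {R : Type*} [CommSemiring R] [DecidableEq ι]
    {A : Matrix ι ι R} (hA : A.IsDiag) (x : ι → R) :
    x ⬝ᵥ A *ᵥ x = ∑ i, A i i * x i ^ 2 := by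
  conv_lhs => rw [← hA.diagonal_diag]
  simp only [dotProduct, mulVec_diagonal, diag_apply]
  exact Finset.sum_congr rfl fun i _ => by ring

lemma sum_mul_sq_le_sup'_mul_sum_sq (hι : (Finset.univ : Finset ι).Nonempty) (d x : ι → ℝ) :
    ∑ i, d i * x i ^ 2 ≤ Finset.univ.sup' hι d * ∑ i, x i ^ 2 := by
  rw [Finset.mul_sum]
  gcongr with i hi
  exact Finset.le_sup' d hi

lemma sum_mul_sq_of_forall_ne_eq_zero {x : ι → ℝ} {i : ι} (hx : ∀ j ≠ i, x j = 0) (d : ι → ℝ) :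
    ∑ j, d j * x j ^ 2 = d i * ∑ j, x j ^ 2 := by
  rw [Finset.sum_eq_single i (fun j _ hj => by simp [hx j hj]) (by simp),
    Finset.sum_eq_single i (fun j _ hj => by simp [hx j hj]) (by simp)]

lemma sum_sq_transpose_mulVec_of_mem_orthogonalGroup [DecidableEq ι] {U : Matrix ι ι ℝ}
    (hU : U ∈ orthogonalGroup ι ℝ) (x : ι → ℝ) : ∑ i, (Uᵀ *ᵥ x) i ^ 2 = ∑ i, x i ^ 2 := by
  have hsq (y : ι → ℝ) : ∑ i, y i ^ 2 = y ⬝ᵥ y := by simp only [dotProduct, sq]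
  rw [hsq, hsq, dotProduct_mulVec, ← mulVec_transpose, transpose_transpose, mulVec_mulVec,
    (mem_orthogonalGroup_iff _ _).mp hU, one_mulVec]

lemma exists_mem_orthogonalGroup_transpose_mulVec_eq_zero [DecidableEq ι] (b : ι → ℝ) (i : ι) :
    ∃ W ∈ orthogonalGroup ι ℝ, ∀ j ≠ i, (Wᵀ *ᵥ b) j = 0 := by
  by_cases hb : b = 0
  · exact ⟨1, one_mem _, fun j _ => by simp [hb]⟩
  set v : EuclideanSpace ℝ ι := WithLp.toLp 2 b
  have hv : v ≠ 0 := by simpa [v] using hb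
  have hu : Orthonormal ℝ (({i} : Set ι).domRestrict fun _ => ‖v‖⁻¹ • v) := by
    rw [orthonormal_iff_ite]
    rintro ⟨j, rfl⟩ ⟨k, rfl⟩
    simp [norm_smul, hv]
  obtain ⟨ob, hob⟩ := hu.exists_orthonormalBasis_extension_of_card_eq (by simp)
  refine ⟨(EuclideanSpace.basisFun ι ℝ).toBasis.toMatrix ob,
    (EuclideanSpace.basisFun ι ℝ).toMatrix_orthonormalBasis_mem_orthogonal ob, fun j hj => ?_⟩
  have hjv : inner ℝ (ob j) v = 0 := by
    have : inner ℝ (ob j) (ob i) = 0 := ob.orthonormal.2 hj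
    rw [hob i rfl, inner_smul_right] at this
    simpa [hv] using this
  simpa [mulVec, dotProduct, EuclideanSpace.inner_eq_star_dotProduct,
    Module.Basis.toMatrix_apply, mul_comm, v] using hjv

end

lemma exists_isSO_transpose_row_eq_of_ne {n : ℕ} {W : Matrix (Fin n) (Fin n) ℝ}
    (hW : W ∈ orthogonalGroup (Fin n) ℝ) (i : Fin n) :
    ∃ V, isSO V ∧ ∀ j ≠ i, Vᵀ j = Wᵀ j := by
  have hWW : Wᵀ * W = 1 := (mem_orthogonalGroup_iff' _ _).mp hW
  have hdet : W.det * W.det = 1 := by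
    simpa [det_mul, det_transpose] using congrArg det hWW
  set s := Function.update (1 : Fin n → ℝ) i W.det
  have hs : s * s = 1 := by
    ext j
    by_cases hj : j = i
    · subst hj; simpa [s] using hdet
    · simp [s, hj]
  refine ⟨W * diagonal s, ⟨?_, ?_⟩, fun j hj => ?_⟩
  · rw [transpose_mul, diagonal_transpose, mul_assoc, ← mul_assoc Wᵀ, hWW, one_mul,
      diagonal_mul_diagonal]
    exact (congrArg diagonal hs).trans diagonal_one
  · rw [det_mul, det_diagonal, Finset.prod_update_of_mem (Finset.mem_univ i)]
    simpa using hdet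
  · ext k
    simp [s, hj]

lemma exists_isSO_transpose_mulVec_eq_zero {n : ℕ} (b : Fin n → ℝ) (i : Fin n) :
    ∃ V, isSO V ∧ ∀ j ≠ i, (Vᵀ *ᵥ b) j = 0 := by
  obtain ⟨W, hW, hWb⟩ := exists_mem_orthogonalGroup_transpose_mulVec_eq_zero b i
  obtain ⟨V, hV, hVW⟩ := exists_isSO_transpose_row_eq_of_ne hW i
  exact ⟨V, hV, fun j hj => (congrArg (· ⬝ᵥ b) (hVW j hj)).trans (hWb j hj)⟩

theorem sup_rotation_quadform_general (n : ℕ) (hn : 1 ≤ n) (a : Fin n → ℝ)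
    (M : Matrix (Fin n) (Fin n) ℝ)
    (Lam : Matrix (Fin n) (Fin n) ℝ) (hdiag : Lam.IsDiag) :
    IsGreatest
      {r : ℝ | ∃ V : Matrix (Fin n) (Fin n) ℝ, isSO V ∧
        r = a ⬝ᵥ (M * V * Lam * Vᵀ * Mᵀ).mulVec a}
      (_root_.enorm (Mᵀ.mulVec a) ^ 2 *
        Finset.univ.sup' ⟨⟨0, hn⟩, Finset.mem_univ _⟩ (fun i : Fin n => Lam i i)) := by
  set b := Mᵀ *ᵥ a
  have hvalue (V : Matrix (Fin n) (Fin n) ℝ) :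
      a ⬝ᵥ (M * V * Lam * Vᵀ * Mᵀ) *ᵥ a = ∑ i, Lam i i * (Vᵀ *ᵥ b) i ^ 2 := by
    rw [show M * V * Lam * Vᵀ * Mᵀ = M * V * Lam * (M * V)ᵀ by
        simp only [transpose_mul, mul_assoc],
      dotProduct_mul_mul_transpose_mulVec_s15, hdiag.dotProduct_mulVec_self, transpose_mul,
      ← mulVec_mulVec]
  have hb : _root_.enorm b ^ 2 = ∑ i, b i ^ 2 := Real.sq_sqrt (by positivity)
  have hrot {V : Matrix (Fin n) (Fin n) ℝ} (hV : isSO V) :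
      ∑ i, (Vᵀ *ᵥ b) i ^ 2 = ∑ i, b i ^ 2 :=
    sum_sq_transpose_mulVec_of_mem_orthogonalGroup ((mem_orthogonalGroup_iff' _ _).mpr hV.1) b
  constructor
  · obtain ⟨i, -, hi⟩ := Finset.exists_mem_eq_sup' ⟨⟨0, hn⟩, Finset.mem_univ _⟩
      (fun i : Fin n => Lam i i)
    obtain ⟨V, hV, hVb⟩ := exists_isSO_transpose_mulVec_eq_zero b i
    refine ⟨V, hV, ?_⟩
    rw [hvalue, sum_mul_sq_of_forall_ne_eq_zero hVb, hrot hV, hb, hi, mul_comm]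
  · rintro _ ⟨V, hV, rfl⟩
    rw [hvalue, hb, mul_comm, ← hrot hV]
    exact sum_mul_sq_le_sup'_mul_sum_sq _ _ _

/-- the supremum over `V ∈ SO(n)` of `aᵀ M V Λ Vᵀ Mᵀ a` equals
`‖Mᵀa‖₂² · max_i Λ_{ii}` and is attained. -/
theorem sup_rotation_quadform (n : ℕ) (hn : 1 ≤ n) (a : Fin n → ℝ)
    (M : Matrix (Fin n) (Fin n) ℝ)
    (Lam : Matrix (Fin n) (Fin n) ℝ) (hdiag : Lam.IsDiag) (hnn : ∀ i, 0 ≤ Lam i i) :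
    IsGreatest
      {r : ℝ | ∃ V : Matrix (Fin n) (Fin n) ℝ, isSO V ∧
        r = a ⬝ᵥ (M * V * Lam * Vᵀ * Mᵀ).mulVec a}
      (_root_.enorm (Mᵀ.mulVec a) ^ 2 *
        Finset.univ.sup' ⟨⟨0, hn⟩, Finset.mem_univ _⟩ (fun i : Fin n => Lam i i)) :=
  sup_rotation_quadform_general n hn a M Lam hdiag
end
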